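/- arXiv:2012.10469 — 2 statements merged into one kernel-verified Lean document; each statement's English description precedes it below -/
import Mathlib

section
/- Golden–Thompson bound on the normalization constant: for X symmetric positive definite with Tr(X)=1 and symmetric G with ‖G‖_2 ≤ G₀, it holds that log(Tr(exp(log X - ηG))) ≤ η G₀ for any η > 0. -/
/-!
Let `w_k` be orthonormal eigenvectors of `M = log X - η G`, with eigenvalues `μ_k`. Then
`μ_k = ⟨w_k, log X w_k⟩ - η ⟨w_k, G w_k⟩ ≤ ⟨w_k, log X w_k⟩ + η G₀`, and Jensen's inequality in the
eigenbasis of `X` gives `exp ⟨w, log X w⟩ ≤ ⟨w, X w⟩` for unit `w`. Summing over `k`,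
`Tr exp M = ∑ exp μ_k ≤ exp (η G₀) ∑ ⟨w_k, X w_k⟩ = exp (η G₀) Tr X = exp (η G₀)`,
without Golden–Thompson.
-/

open Matrix

noncomputable def matLog {n : ℕ} {A : Matrix (Fin n) (Fin n) ℝ} (hA : A.IsHermitian) :
    Matrix (Fin n) (Fin n) ℝ :=
  (hA.eigenvectorUnitary : Matrix (Fin n) (Fin n) ℝ) *
    Matrix.diagonal (fun i => Real.log (hA.eigenvalues i)) *
    (hA.eigenvectorUnitary : Matrix (Fin n) (Fin n) ℝ)ᴴ

noncomputable def matExp {n : ℕ} {A : Matrix (Fin n) (Fin n) ℝ} (hA : A.IsHermitian) :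
    Matrix (Fin n) (Fin n) ℝ :=
  (hA.eigenvectorUnitary : Matrix (Fin n) (Fin n) ℝ) *
    Matrix.diagonal (fun i => Real.exp (hA.eigenvalues i)) *
    (hA.eigenvectorUnitary : Matrix (Fin n) (Fin n) ℝ)ᴴ

lemma matLog_isHermitian {n : ℕ} {A : Matrix (Fin n) (Fin n) ℝ} (hA : A.IsHermitian) :
    (matLog hA).IsHermitian := by
  unfold matLog Matrix.IsHermitian
  simp [Matrix.conjTranspose_mul, Matrix.mul_assoc, Matrix.diagonal_conjTranspose]

lemma smul_isHermitian {n : ℕ} {G : Matrix (Fin n) (Fin n) ℝ} (hG : G.IsHermitian)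
    (η : ℝ) : (η • G).IsHermitian := by
  unfold Matrix.IsHermitian at *
  rw [Matrix.conjTranspose_smul, hG, star_trivial]


section

variable {ι : Type*} [Fintype ι]

lemma mul_conjTranspose_of_mem_unitaryGroup [DecidableEq ι] {U : Matrix ι ι ℝ}
    (hU : U ∈ unitaryGroup ι ℝ) : U * Uᴴ = 1 :=
  mem_unitaryGroup_iff.mp hU

lemma conjTranspose_mul_of_mem_unitaryGroup [DecidableEq ι] {U : Matrix ι ι ℝ}
    (hU : U ∈ unitaryGroup ι ℝ) : Uᴴ * U = 1 :=
  mem_unitaryGroup_iff'.mp hU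

lemma dotProduct_mul_diagonal_mul_conjTranspose_mulVec [DecidableEq ι] (U : Matrix ι ι ℝ)
    (d v : ι → ℝ) : v ⬝ᵥ (U * diagonal d * Uᴴ) *ᵥ v = ∑ j, d j * (Uᴴ *ᵥ v) j ^ 2 := by
  rw [← mulVec_mulVec, ← mulVec_mulVec, dotProduct_mulVec, conjTranspose_eq_transpose_of_trivial,
    ← mulVec_transpose]
  simp only [dotProduct, mulVec_diagonal]
  exact Finset.sum_congr rfl fun j _ => by ring

lemma sum_sq_conjTranspose_mulVec [DecidableEq ι] {U : Matrix ι ι ℝ}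
    (hU : U ∈ unitaryGroup ι ℝ) (v : ι → ℝ) : ∑ j, (Uᴴ *ᵥ v) j ^ 2 = v ⬝ᵥ v := by
  have h := dotProduct_mul_diagonal_mul_conjTranspose_mulVec U (fun _ => 1) v
  rw [diagonal_one, Matrix.mul_one, mul_conjTranspose_of_mem_unitaryGroup hU, one_mulVec] at h
  simpa using h.symm

lemma trace_mul_diagonal_mul_conjTranspose [DecidableEq ι] {U : Matrix ι ι ℝ}
    (hU : U ∈ unitaryGroup ι ℝ) (d : ι → ℝ) : (U * diagonal d * Uᴴ).trace = ∑ i, d i := by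
  rw [trace_mul_cycle, conjTranspose_mul_of_mem_unitaryGroup hU, Matrix.one_mul,
    trace_diagonal]

lemma conjTranspose_mul_mul_apply_self (W A : Matrix ι ι ℝ) (k : ι) :
    (Wᴴ * A * W) k k = Wᵀ k ⬝ᵥ A *ᵥ Wᵀ k := by
  rw [mul_mul_apply, conjTranspose_eq_transpose_of_trivial]

lemma sum_dotProduct_mulVec_transpose_of_mem_unitaryGroup [DecidableEq ι] {W : Matrix ι ι ℝ}
    (hW : W ∈ unitaryGroup ι ℝ) (A : Matrix ι ι ℝ) :
    ∑ k, Wᵀ k ⬝ᵥ A *ᵥ Wᵀ k = A.trace := by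
  simp_rw [← conjTranspose_mul_mul_apply_self]
  change (Wᴴ * A * W).trace = A.trace
  rw [trace_mul_cycle, mul_conjTranspose_of_mem_unitaryGroup hW, Matrix.one_mul]

lemma dotProduct_self_transpose_of_mem_unitaryGroup [DecidableEq ι] {W : Matrix ι ι ℝ}
    (hW : W ∈ unitaryGroup ι ℝ) (k : ι) : Wᵀ k ⬝ᵥ Wᵀ k = 1 := by
  have h := conjTranspose_mul_mul_apply_self W 1 k
  rwa [Matrix.mul_one, conjTranspose_mul_of_mem_unitaryGroup hW, one_mulVec,
    one_apply_eq, eq_comm] at h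

namespace Matrix.IsHermitian

variable [DecidableEq ι] {A : Matrix ι ι ℝ}

lemma eq_mul_diagonal_mul_conjTranspose (hA : A.IsHermitian) :
    A = (hA.eigenvectorUnitary : Matrix ι ι ℝ) * diagonal hA.eigenvalues *
      (hA.eigenvectorUnitary : Matrix ι ι ℝ)ᴴ := by
  conv_lhs => rw [hA.spectral_theorem]
  simp [RCLike.ofReal_real_eq_id, star_eq_conjTranspose]

lemma eigenvalues_eq_dotProduct_mulVec (hA : A.IsHermitian) (k : ι) :
    hA.eigenvalues k = (hA.eigenvectorUnitary : Matrix ι ι ℝ)ᵀ k ⬝ᵥ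
      A *ᵥ (hA.eigenvectorUnitary : Matrix ι ι ℝ)ᵀ k := by
  have h := hA.conjStarAlgAut_star_eigenvectorUnitary
  simp only [Unitary.conjStarAlgAut_star_apply, star_eq_conjTranspose,
    RCLike.ofReal_real_eq_id, Function.id_comp] at h
  rw [← conjTranspose_mul_mul_apply_self, h, diagonal_apply_eq]

lemma dotProduct_mulVec_eq_sum (hA : A.IsHermitian) (v : ι → ℝ) :
    v ⬝ᵥ A *ᵥ v = ∑ j, hA.eigenvalues j *
      ((hA.eigenvectorUnitary : Matrix ι ι ℝ)ᴴ *ᵥ v) j ^ 2 := by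
  conv_lhs => rw [hA.eq_mul_diagonal_mul_conjTranspose]
  exact dotProduct_mul_diagonal_mul_conjTranspose_mulVec _ _ _

lemma abs_dotProduct_mulVec_le (hA : A.IsHermitian) {c : ℝ} (hc : ∀ i, |hA.eigenvalues i| ≤ c)
    {v : ι → ℝ} (hv : v ⬝ᵥ v = 1) : |v ⬝ᵥ A *ᵥ v| ≤ c := by
  set p := fun j => ((hA.eigenvectorUnitary : Matrix ι ι ℝ)ᴴ *ᵥ v) j ^ 2
  have hp : ∑ j, p j = 1 := (sum_sq_conjTranspose_mulVec hA.eigenvectorUnitary.2 v).trans hv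
  have hp₀ : ∀ j, 0 ≤ p j := fun j => sq_nonneg _
  calc |v ⬝ᵥ A *ᵥ v| = |∑ j, hA.eigenvalues j * p j| := by rw [hA.dotProduct_mulVec_eq_sum]
    _ ≤ ∑ j, |hA.eigenvalues j| * p j := by
      refine (Finset.abs_sum_le_sum_abs _ _).trans_eq (Finset.sum_congr rfl fun j _ => ?_)
      rw [abs_mul, abs_of_nonneg (hp₀ j)]
    _ ≤ ∑ j, c * p j := by gcongr with j; exact hc j
    _ = c := by rw [← Finset.mul_sum, hp, mul_one]

end Matrix.IsHermitian

end

section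

variable {n : ℕ}

lemma trace_matExp {A : Matrix (Fin n) (Fin n) ℝ} (hA : A.IsHermitian) :
    (matExp hA).trace = ∑ i, Real.exp (hA.eigenvalues i) := by
  rw [matExp]
  exact trace_mul_diagonal_mul_conjTranspose hA.eigenvectorUnitary.2 _

/-- Jensen's inequality for `exp`, with weights the squared coordinates of `v` in an eigenbasis
of `A`. -/
lemma exp_dotProduct_matLog_mulVec_le {A : Matrix (Fin n) (Fin n) ℝ} (hA : A.PosDef)
    {v : Fin n → ℝ} (hv : v ⬝ᵥ v = 1) :
    Real.exp (v ⬝ᵥ matLog hA.1 *ᵥ v) ≤ v ⬝ᵥ A *ᵥ v := by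
  have hp := sum_sq_conjTranspose_mulVec hA.1.eigenvectorUnitary.2 v
  rw [hv] at hp
  have jensen := convexOn_exp.map_sum_le (t := Finset.univ)
    (fun j _ => sq_nonneg _) hp (fun j _ => Set.mem_univ (Real.log (hA.1.eigenvalues j)))
  have exp_log_eigenvalues j : Real.exp (Real.log (hA.1.eigenvalues j)) = hA.1.eigenvalues j :=
    Real.exp_log (hA.eigenvalues_pos j)
  simp only [smul_eq_mul, exp_log_eigenvalues] at jensen
  rw [matLog, dotProduct_mul_diagonal_mul_conjTranspose_mulVec, hA.1.dotProduct_mulVec_eq_sum]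
  simpa only [mul_comm] using jensen

lemma exp_dotProduct_mulVec_sub_smul_le {X G : Matrix (Fin n) (Fin n) ℝ} (hX : X.PosDef)
    (hG : G.IsHermitian) {G₀ : ℝ} (hGnorm : ∀ i, |hG.eigenvalues i| ≤ G₀) {η : ℝ} (hη : 0 ≤ η)
    {v : Fin n → ℝ} (hv : v ⬝ᵥ v = 1) :
    Real.exp (v ⬝ᵥ (matLog hX.1 - η • G) *ᵥ v) ≤ Real.exp (η * G₀) * (v ⬝ᵥ X *ᵥ v) := by
  have hGv := neg_le_of_abs_le (hG.abs_dotProduct_mulVec_le hGnorm hv)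
  rw [sub_mulVec, dotProduct_sub, smul_mulVec, dotProduct_smul, smul_eq_mul]
  calc Real.exp (v ⬝ᵥ matLog hX.1 *ᵥ v - η * (v ⬝ᵥ G *ᵥ v))
      ≤ Real.exp (η * G₀ + v ⬝ᵥ matLog hX.1 *ᵥ v) := by gcongr; nlinarith [hGv]
    _ ≤ Real.exp (η * G₀) * (v ⬝ᵥ X *ᵥ v) := by
      rw [Real.exp_add]; gcongr; exact exp_dotProduct_matLog_mulVec_le hX hv

end

/-- Golden–Thompson bound on the normalization constant: for `X ≻ 0`
symmetric with `Tr X = 1` and symmetric `G` with `‖G‖₂ ≤ G₀`,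
`log(Tr(exp(log X - ηG))) ≤ η G₀` for any `η > 0`. -/
theorem log_trace_exp_le {n : ℕ} {X G : Matrix (Fin n) (Fin n) ℝ}
    (hX : X.PosDef) (hXtr : X.trace = 1) (hG : G.IsHermitian)
    {G₀ : ℝ} (hGnorm : ∀ i, |hG.eigenvalues i| ≤ G₀) {η : ℝ} (hη : 0 < η) :
    Real.log ((matExp ((matLog_isHermitian hX.1).sub (smul_isHermitian hG η))).trace)
      ≤ η * G₀ := by
  set hM := (matLog_isHermitian hX.1).sub (smul_isHermitian hG η)
  have trace_le : (matExp hM).trace ≤ Real.exp (η * G₀) := by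
    set W : Matrix (Fin n) (Fin n) ℝ := ↑hM.eigenvectorUnitary
    have hW : W ∈ unitaryGroup (Fin n) ℝ := hM.eigenvectorUnitary.2
    calc (matExp hM).trace = ∑ k, Real.exp (hM.eigenvalues k) := trace_matExp hM
      _ ≤ ∑ k, Real.exp (η * G₀) * (Wᵀ k ⬝ᵥ X *ᵥ Wᵀ k) := by
        gcongr with k
        rw [hM.eigenvalues_eq_dotProduct_mulVec]
        exact exp_dotProduct_mulVec_sub_smul_le hX hG hGnorm hη.le
          (dotProduct_self_transpose_of_mem_unitaryGroup hW k)
      _ = Real.exp (η * G₀) := by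
        rw [← Finset.mul_sum, sum_dotProduct_mulVec_transpose_of_mem_unitaryGroup hW, hXtr,
          mul_one]
  have : Nonempty (Fin n) := Fin.pos_iff_nonempty.mp <| Nat.pos_of_ne_zero <| by
    rintro rfl
    simp at hXtr
  have trace_pos : 0 < (matExp hM).trace := by
    rw [trace_matExp]
    exact Finset.sum_pos (fun _ _ => Real.exp_pos _) Finset.univ_nonempty
  exact (Real.log_le_iff_le_exp trace_pos).mpr trace_le
end

section
/- Ky Fan partial sum bound via projections: for a symmetric matrix M and any n×r matrix W with orthonormal columns, -Σ_{i=1}^r λ_i(M) ≤ -Tr(W W^T M), i.e., Tr(W W^T M) ≤ Σ_{i=1}^r λ_i(M), with equality when W spans the top-r eigenspace. -/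
open Matrix

/-- Eigenvalues of a real symmetric matrix sorted in non-increasing order. -/
noncomputable def eigDesc {n : ℕ} {A : Matrix (Fin n) (Fin n) ℝ} (hA : A.IsHermitian) :
    Fin n → ℝ :=
  fun i => hA.eigenvalues (Tuple.sort hA.eigenvalues (Fin.rev i))

/-!
Diagonalise `M = U diag(λ) Uᵀ`. Then `Tr(W Wᵀ M) = ∑ⱼ λⱼ Pⱼⱼ` for the orthogonal projection
`P = Uᵀ W Wᵀ U` of rank `r`, whose diagonal entries lie in `[0, 1]` and sum to `r`. Among all such
weightings, `∑ⱼ λⱼ tⱼ` is largest when the weight sits on the `r` largest eigenvalues: comparing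
with a threshold `μ` between the top `r` values and the rest, each `(λⱼ - μ) tⱼ` is at most
`λⱼ - μ` on the top set and at most `0` off it.
-/

open scoped MatrixOrder ComplexOrder Finset

theorem Finset.sum_mul_le_sum_of_sum_eq_card {ι : Type*} [Fintype ι] [DecidableEq ι]
    {S : Finset ι} {g t : ι → ℝ} (hgS : ∀ i ∈ S, ∀ j ∉ S, g j ≤ g i)
    (ht : ∀ j, t j ∈ Set.Icc 0 1) (hsum : ∑ j, t j = #S) :
    ∑ j, g j * t j ≤ ∑ i ∈ S, g i := by
  obtain ⟨μ, hμS, hμSc⟩ : ∃ μ, (∀ i ∈ S, μ ≤ g i) ∧ ∀ j ∉ S, g j ≤ μ := by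
    rcases S.eq_empty_or_nonempty with rfl | hS
    · obtain ⟨μ, hμ⟩ := (Finset.univ.image g).bddAbove
      exact ⟨μ, by simp, fun j _ ↦ hμ (by simp)⟩
    · exact ⟨S.inf' hS g, fun i hi ↦ S.inf'_le g hi, fun j hj ↦ S.le_inf' hS g (hgS · · j hj)⟩
  have hterm : ∀ j, (g j - μ) * t j ≤ if j ∈ S then g j - μ else 0 := by
    intro j
    split_ifs with hj
    · nlinarith [hμS j hj, (ht j).2]
    · nlinarith [hμSc j hj, (ht j).1]
  calc ∑ j, g j * t j = ∑ j, (g j - μ) * t j + μ * #S := by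
        rw [← hsum, Finset.mul_sum, ← Finset.sum_add_distrib]
        exact Finset.sum_congr rfl fun j _ ↦ by ring
    _ ≤ ∑ j, (if j ∈ S then g j - μ else 0) + μ * #S := by gcongr with j; exact hterm j
    _ = ∑ i ∈ S, g i := by
        rw [← Finset.sum_filter, Finset.filter_mem_eq_inter, Finset.univ_inter,
          Finset.sum_sub_distrib, Finset.sum_const, nsmul_eq_mul]
        ring

theorem IsStarProjection.diag_mem_Icc {ι 𝕜 : Type*} [Fintype ι] [DecidableEq ι] [RCLike 𝕜]
    {P : Matrix ι ι 𝕜} (hP : IsStarProjection P) (i : ι) : P i i ∈ Set.Icc 0 1 := by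
  have h₀ := hP.nonneg.posSemidef.diag_nonneg (i := i)
  have h₁ := hP.one_sub.nonneg.posSemidef.diag_nonneg (i := i)
  simp only [Matrix.sub_apply, one_apply_eq, sub_nonneg] at h₁
  exact ⟨h₀, h₁⟩

theorem Matrix.isStarProjection_mul_conjTranspose {m n R : Type*} [Fintype m] [Fintype n]
    [DecidableEq n] [Semiring R] [StarRing R] {W : Matrix m n R} (hW : Wᴴ * W = 1) :
    IsStarProjection (W * Wᴴ) where
  isIdempotentElem := by rw [IsIdempotentElem, Matrix.mul_assoc, ← Matrix.mul_assoc Wᴴ, hW,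
    Matrix.one_mul]
  isSelfAdjoint := by simp [IsSelfAdjoint, star_eq_conjTranspose]

theorem Matrix.trace_star_mul_mul_unitary {n R : Type*} [Fintype n] [DecidableEq n]
    [CommSemiring R] [StarRing R] (U : unitary (Matrix n n R)) (A : Matrix n n R) :
    (star (U : Matrix n n R) * A * U).trace = A.trace := by
  rw [trace_mul_cycle, Unitary.mul_star_self_of_mem U.2, Matrix.one_mul]

theorem Matrix.IsHermitian.trace_mul_eq_sum_eigenvalues {n 𝕜 : Type*} [Fintype n]
    [DecidableEq n] [RCLike 𝕜] {M : Matrix n n 𝕜} (hM : M.IsHermitian) (A : Matrix n n 𝕜) :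
    (A * M).trace = ∑ j, (hM.eigenvalues j : 𝕜) *
      (star (hM.eigenvectorUnitary : Matrix n n 𝕜) * A * hM.eigenvectorUnitary) j j := by
  conv_lhs => rw [hM.spectral_theorem, Unitary.conjStarAlgAut_apply, ← Matrix.mul_assoc,
    trace_mul_cycle, ← Matrix.mul_assoc]
  simp [trace, mul_diagonal, mul_comm]

theorem eigDesc_antitone {n : ℕ} {A : Matrix (Fin n) (Fin n) ℝ} (hA : A.IsHermitian) :
    Antitone (eigDesc hA) :=
  (Tuple.monotone_sort hA.eigenvalues).comp_antitone Fin.rev_anti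

/-- Ky Fan partial sum bound via projections: for symmetric `M` and any
`n×r` matrix `W` with orthonormal columns, `Tr(W Wᵀ M) ≤ ∑_{i=1}^r λ_i(M)`. -/
theorem kyFan_projection_bound {n r : ℕ} (hrn : r ≤ n)
    {M : Matrix (Fin n) (Fin n) ℝ} (hM : M.IsHermitian)
    (W : Matrix (Fin n) (Fin r) ℝ) (hW : Wᵀ * W = 1) :
    (W * Wᵀ * M).trace
      ≤ ∑ i ∈ Finset.univ.filter (fun i : Fin n => (i : ℕ) < r), eigDesc hM i := by
  set U : Matrix (Fin n) (Fin n) ℝ := hM.eigenvectorUnitary.1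
  set P := star U * (W * Wᵀ) * U
  have hP : IsStarProjection P := by
    have hW' : Wᴴ * W = 1 := by rwa [conjTranspose_eq_transpose_of_trivial]
    simpa [conjTranspose_eq_transpose_of_trivial] using
      (isStarProjection_mul_conjTranspose hW').map
        (Unitary.conjStarAlgAut ℝ _ (star hM.eigenvectorUnitary))
  have htrace : ∑ j, P j j = r := by
    change P.trace = r
    rw [trace_star_mul_mul_unitary, trace_mul_comm, hW, trace_one, Fintype.card_fin]
  let τ : Equiv.Perm (Fin n) := Fin.revPerm.trans (Tuple.sort hM.eigenvalues)
  calc (W * Wᵀ * M).trace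
      = ∑ j, hM.eigenvalues j * P j j := by simpa using hM.trace_mul_eq_sum_eigenvalues (W * Wᵀ)
    _ = ∑ i, eigDesc hM i * P (τ i) (τ i) :=
        (Equiv.sum_comp τ fun j ↦ hM.eigenvalues j * P j j).symm
    _ ≤ _ := by
      refine Finset.sum_mul_le_sum_of_sum_eq_card (fun i hi j hj ↦ eigDesc_antitone hM ?_)
        (fun j ↦ hP.diag_mem_Icc _) ?_
      · simp only [Finset.mem_filter, Finset.mem_univ, true_and] at hi hj
        exact Fin.le_def.2 (by omega)
      · rw [Equiv.sum_comp τ fun j ↦ P j j, htrace, Fin.card_filter_val_lt, min_eq_right hrn]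
end
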